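/- For any d ≥ 0 and any n with 1 ≤ n ≤ 2^d, the tree T̂_d contains a rooted subtree T on exactly n vertices (containing the root of T̂_d) such that all weight can be moved to the root via total acquisition moves; in particular a_t(T) = 1. -/

import Mathlib

/-- A total acquisition move: all the weight of `u` is moved to an adjacent
vertex `v`, provided `v` carries at least as much weight as `u`. -/
def AcqMove {V : Type*} [DecidableEq V] (G : SimpleGraph V) (w w' : V → ℕ) : Prop :=
  ∃ u v, G.Adj u v ∧ 0 < w u ∧ w u ≤ w v ∧
    w' = Function.update (Function.update w v (w v + w u)) u 0

/-- Reachability by a finite sequence of total acquisition moves. -/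
def AcqReach {V : Type*} [DecidableEq V] (G : SimpleGraph V) : (V → ℕ) → (V → ℕ) → Prop :=
  Relation.ReflTransGen (AcqMove G)

/-- No total acquisition move is available from `w`. -/
def AcqMaximal {V : Type*} [DecidableEq V] (G : SimpleGraph V) (w : V → ℕ) : Prop :=
  ∀ w', ¬ AcqMove G w w'

/-- The total acquisition number: minimum number of vertices with positive
weight after a maximal sequence of total acquisition moves starting from the
all-ones weight function. -/
noncomputable def totalAcq {V : Type*} [DecidableEq V] (G : SimpleGraph V) : ℕ :=
  sInf { m | ∃ w, AcqReach G (fun _ => 1) w ∧ AcqMaximal G w ∧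
    m = {v | 0 < w v}.ncard }


/-- The recursively defined rooted tree `T̂_d`, encoded on vertex set
`Finset (Fin d)`: the root is `∅`, and the children of a vertex `s` are the
sets `insert a s` with `a` smaller than every element of `s` (so the parent of
a nonempty vertex `t` is obtained by erasing its minimum).  The root `∅` thus
has children `{0}, {1}, …, {d-1}`, and `{j}` is the root of a copy of `T̂_j`,
exactly as in the recursive definition. -/
def hatT (d : ℕ) : SimpleGraph (Finset (Fin d)) where
  Adj s t :=
    (∃ a ∈ t, s = t.erase a ∧ ∀ b ∈ s, a < b) ∨
    (∃ a ∈ s, t = s.erase a ∧ ∀ b ∈ t, a < b)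
  symm := ⟨fun s t h => Or.symm h⟩
  loopless := by
    constructor
    intro s h
    rcases h with ⟨a, ha, hs, _⟩ | ⟨a, ha, hs, _⟩ <;> rw [hs] at ha <;>
      exact Finset.notMem_erase _ _ ha

/-- The number of vertices of `T̂_i`: the root together with one copy each of
`T̂_0, …, T̂_{i-1}`. -/
def hatTCard : (i : ℕ) → ℕ
  | i => 1 + ∑ j : Fin i, hatTCard j
  decreasing_by exact j.isLt

/-!
Label a vertex `s` of `T̂_d` by its binary value `∑_{a ∈ s} 2 ^ a`: this is a bijection onto
`[0, 2 ^ d)`, and passing to the parent (erasing a digit) lowers the value, so the vertices of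
value `< n` form a rooted subtree `T_n` on `n` vertices. For `2 ^ k < n ≤ 2 ^ (k + 1)` write
`n = 2 ^ k + m`: then `T_n` is `T_(2 ^ k)` together with a copy of `T_m`, obtained by adding the
digit `k`, hanging from the child `{k}` of the root. By induction both parts can be gathered onto
their roots, and the `m ≤ 2 ^ k` chips on `{k}` then move onto the root. Since weight is conserved,
no configuration has fewer than one loaded vertex, so `a_t(T_n) = 1`.
-/

open Finset Function

section Acquisition

variable {V V' : Type*} [DecidableEq V] [DecidableEq V'] {G : SimpleGraph V}
  {H : SimpleGraph V'}

theorem AcqMove.sum_eq [Fintype V] {w w' : V → ℕ} (h : AcqMove G w w') :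
    ∑ x, w' x = ∑ x, w x := by
  obtain ⟨u, v, huv, -, -, rfl⟩ := h
  have hvu : v ∈ univ.erase u := mem_erase.2 ⟨huv.ne.symm, mem_univ v⟩
  rw [← add_sum_erase _ _ (mem_univ u), ← add_sum_erase _ _ (mem_univ u),
    ← add_sum_erase _ _ hvu, ← add_sum_erase _ _ hvu,
    sum_congr rfl fun x hx => by
      rw [update_of_ne (ne_of_mem_erase (mem_of_mem_erase hx)),
        update_of_ne (ne_of_mem_erase hx)]]
  simp only [update_self, update_of_ne huv.ne.symm]
  ring

theorem AcqReach.sum_eq [Fintype V] {w w' : V → ℕ} (h : AcqReach G w w') :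
    ∑ x, w' x = ∑ x, w x := by
  induction h with
  | refl => rfl
  | tail _ hmove ih => rw [hmove.sum_eq, ih]

theorem AcqMove.map (f : G →g H) (hf : Injective f) {w w' : V → ℕ} (h : AcqMove G w w')
    {W : V' → ℕ} (hW : ∀ x, W (f x) = w x) :
    ∃ W', AcqMove H W W' ∧ (∀ x, W' (f x) = w' x) ∧ ∀ y ∉ Set.range f, W' y = W y := by
  obtain ⟨u, v, huv, hu, hle, rfl⟩ := h
  refine ⟨_, ⟨f u, f v, f.map_adj huv, by rwa [hW], by rwa [hW, hW], rfl⟩, fun x => ?_,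
    fun y hy => ?_⟩
  · simp only [update_apply, hf.eq_iff, hW]
  · have hyu : y ≠ f u := fun h => hy ⟨u, h.symm⟩
    have hyv : y ≠ f v := fun h => hy ⟨v, h.symm⟩
    rw [update_of_ne hyu, update_of_ne hyv]

theorem AcqReach.map (f : G →g H) (hf : Injective f) {w w' : V → ℕ} (h : AcqReach G w w')
    {W : V' → ℕ} (hW : ∀ x, W (f x) = w x) :
    ∃ W', AcqReach H W W' ∧ (∀ x, W' (f x) = w' x) ∧ ∀ y ∉ Set.range f, W' y = W y := by
  induction h with
  | refl => exact ⟨W, .refl, hW, fun _ _ => rfl⟩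
  | tail _ hmove ih =>
    obtain ⟨W₁, hreach, hW₁, hoff₁⟩ := ih
    obtain ⟨W₂, hmove₂, hW₂, hoff₂⟩ := hmove.map f hf hW₁
    exact ⟨W₂, hreach.tail hmove₂, hW₂, fun y hy => (hoff₂ y hy).trans (hoff₁ y hy)⟩

theorem acqMove_merge {w : V → ℕ} {u v : V} (huv : G.Adj u v) (hu : 0 < w u) (hle : w u ≤ w v)
    (hw : ∀ x, x ≠ u → x ≠ v → w x = 0) :
    AcqMove G w (fun x => if x = v then w v + w u else 0) := by
  refine ⟨u, v, huv, hu, hle, funext fun x => ?_⟩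
  by_cases hxu : x = u
  · subst hxu; simp [huv.ne]
  · by_cases hxv : x = v
    · subst hxv; simp [hxu]
    · simp [hxu, hxv, hw x hxu hxv]

/-- Weight is conserved, so every configuration reached from the all-ones one keeps a positive
vertex. -/
theorem totalAcq_eq_one_of_acqReach [Fintype V] [Nonempty V] {w : V → ℕ} {r : V}
    (h : AcqReach G (fun _ => 1) w) (hw : ∀ x ≠ r, w x = 0) : totalAcq G = 1 := by
  have hsum : ∀ {w'}, AcqReach G (fun _ => 1) w' → ∃ x, 0 < w' x := by
    intro w' h'
    by_contra! hzero
    have := h'.sum_eq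
    simp only [Nat.le_zero.1 (hzero _), sum_const_zero, sum_const, card_univ, smul_eq_mul,
      mul_one] at this
    exact Fintype.card_ne_zero this.symm
  have hpos : {x | 0 < w x} = {r} := by
    obtain ⟨x, hx⟩ := hsum h
    ext y
    simp only [Set.mem_ofPred_eq, Set.mem_singleton_iff]
    have hxr : x = r := by_contra fun h => (hw x h ▸ hx).false
    subst hxr
    exact ⟨fun hy => by_contra fun hyx => (hw y hyx ▸ hy).false, fun hy => hy ▸ hx⟩
  have hmax : AcqMaximal G w := by
    rintro w' ⟨u, v, huv, hu, hle, -⟩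
    have hur : u = r := by_contra fun h => (hw u h ▸ hu).false
    have hvr : v = r := by_contra fun h => (hw v h ▸ hu.trans_le hle).false
    exact huv.ne (hur.trans hvr.symm)
  have hmem : 1 ∈ {m | ∃ w, AcqReach G (fun _ => 1) w ∧ AcqMaximal G w ∧
      m = {v | 0 < w v}.ncard} := ⟨w, h, hmax, by rw [hpos, Set.ncard_singleton]⟩
  refine le_antisymm (Nat.sInf_le hmem) (le_csInf ⟨1, hmem⟩ ?_)
  rintro m ⟨w', h', -, rfl⟩
  obtain ⟨x, hx⟩ := hsum h'
  exact (Set.ncard_pos (Set.toFinite _)).2 ⟨x, hx⟩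

end Acquisition

section BinaryValue

variable {d : ℕ}

def binaryValue (s : Finset (Fin d)) : ℕ := ∑ a ∈ s, 2 ^ (a : ℕ)

theorem binaryValue_injective : Injective (binaryValue (d := d)) := by
  have h : binaryValue (d := d) = (fun t : Finset ℕ => ∑ i ∈ t, 2 ^ i) ∘ map Fin.valEmbedding := by
    ext1 s; simp [binaryValue]
  exact h ▸ (geomSum_injective le_rfl).comp (map_injective _)

theorem two_pow_le_binaryValue {s : Finset (Fin d)} {a : Fin d} (ha : a ∈ s) :
    2 ^ (a : ℕ) ≤ binaryValue s :=
  single_le_sum (f := fun b : Fin d => 2 ^ (b : ℕ)) (fun _ _ => Nat.zero_le _) ha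

theorem binaryValue_lt_two_pow_iff {s : Finset (Fin d)} {k : ℕ} :
    binaryValue s < 2 ^ k ↔ ∀ a ∈ s, (a : ℕ) < k := by
  refine ⟨fun h a ha => (Nat.pow_lt_pow_iff_right (by norm_num)).1
    ((two_pow_le_binaryValue ha).trans_lt h), fun h => ?_⟩
  have := Nat.geomSum_lt (s := s.map Fin.valEmbedding) le_rfl (by simpa using h)
  simpa [binaryValue] using this

theorem binaryValue_erase_add {s : Finset (Fin d)} {a : Fin d} (ha : a ∈ s) :
    binaryValue (s.erase a) + 2 ^ (a : ℕ) = binaryValue s :=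
  sum_erase_add _ _ ha

theorem binaryValue_mono {s t : Finset (Fin d)} (h : s ⊆ t) : binaryValue s ≤ binaryValue t :=
  sum_le_sum_of_subset h

theorem image_binaryValue_univ : univ.image (binaryValue (d := d)) = range (2 ^ d) := by
  refine eq_of_subset_of_card_le (fun x hx => ?_) ?_
  · obtain ⟨s, -, rfl⟩ := mem_image.1 hx
    exact mem_range.2 (binaryValue_lt_two_pow_iff.2 fun a _ => a.isLt)
  · rw [card_image_of_injective _ binaryValue_injective, card_univ, Fintype.card_finset,
      Fintype.card_fin, card_range]

end BinaryValue

def trimmed (d n : ℕ) : Finset (Finset (Fin d)) := {s | binaryValue s < n}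

section Trimmed

variable {d n : ℕ}

@[simp] theorem mem_trimmed {s : Finset (Fin d)} : s ∈ trimmed d n ↔ binaryValue s < n := by
  simp [trimmed]

theorem empty_mem_trimmed (hn : 1 ≤ n) : (∅ : Finset (Fin d)) ∈ trimmed d n := by
  simpa [binaryValue, Nat.pos_iff_ne_zero, Nat.one_le_iff_ne_zero] using hn

theorem card_trimmed (hnd : n ≤ 2 ^ d) : (trimmed d n).card = n := by
  have h : (trimmed d n).image binaryValue = range n := by
    ext x
    refine ⟨fun hx => ?_, fun hx => ?_⟩
    · obtain ⟨s, hs, rfl⟩ := mem_image.1 hx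
      exact mem_range.2 (mem_trimmed.1 hs)
    · obtain ⟨s, -, rfl⟩ := mem_image.1 (image_binaryValue_univ ▸ mem_range.2
        ((mem_range.1 hx).trans_le hnd))
      exact mem_image_of_mem _ (mem_trimmed.2 (mem_range.1 hx))
  rw [← card_image_of_injective _ binaryValue_injective, h, card_range]

theorem erase_mem_trimmed {s : Finset (Fin d)} (hs : s ∈ trimmed d n) (a : Fin d) :
    s.erase a ∈ trimmed d n :=
  mem_trimmed.2 ((binaryValue_mono (erase_subset a s)).trans_lt (mem_trimmed.1 hs))

end Trimmed

theorem hatT_adj_insert {d : ℕ} {s t : Finset (Fin d)} {c : Fin d} (hs : ∀ a ∈ s, a < c)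
    (ht : ∀ a ∈ t, a < c) (h : (hatT d).Adj s t) : (hatT d).Adj (insert c s) (insert c t) := by
  have key : ∀ {s t : Finset (Fin d)}, (∀ a ∈ t, a < c) →
      (∃ a ∈ t, s = t.erase a ∧ ∀ b ∈ s, a < b) →
      ∃ a ∈ insert c t, insert c s = (insert c t).erase a ∧ ∀ b ∈ insert c s, a < b := by
    rintro s t ht ⟨a, hat, rfl, hmin⟩
    have hac := ht a hat
    exact ⟨a, mem_insert_of_mem hat, (erase_insert_of_ne hac.ne').symm,
      forall_mem_insert _ _ _ |>.2 ⟨hac, hmin⟩⟩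
  rcases h with h | h
  · exact Or.inl (key ht h)
  · exact Or.inr (key hs h)

def GathersAtRoot (d n : ℕ) : Prop :=
  AcqReach ((hatT d).induce (trimmed d n : Set (Finset (Fin d)))) (fun _ => 1)
    (fun v => if (v : Finset (Fin d)) = ∅ then n else 0)

section TopDigit

variable {d k m : ℕ}

theorem binaryValue_insert_top (hk : k < d) {s : Finset (Fin d)} (hs : binaryValue s < 2 ^ k) :
    binaryValue (insert ⟨k, hk⟩ s) = 2 ^ k + binaryValue s :=
  sum_insert fun h => (binaryValue_lt_two_pow_iff.1 hs _ h).false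

theorem top_mem_of_two_pow_le (hk : k < d) {s : Finset (Fin d)} (hs : binaryValue s < 2 ^ (k + 1))
    (h : 2 ^ k ≤ binaryValue s) : (⟨k, hk⟩ : Fin d) ∈ s := by
  by_contra hks
  refine h.not_gt (binaryValue_lt_two_pow_iff.2 fun a ha => ?_)
  have hak : (a : ℕ) ≠ k := fun h => hks ((Fin.ext h : a = ⟨k, hk⟩) ▸ ha)
  have := binaryValue_lt_two_pow_iff.1 hs a ha
  omega

theorem trimmed_two_pow_add_cases (hk : k < d) (hm : m ≤ 2 ^ k) {s : Finset (Fin d)}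
    (hs : s ∈ trimmed d (2 ^ k + m)) :
    s ∈ trimmed d (2 ^ k) ∨ (⟨k, hk⟩ : Fin d) ∈ s ∧ s.erase ⟨k, hk⟩ ∈ trimmed d m := by
  rw [mem_trimmed] at hs ⊢
  refine or_iff_not_imp_left.2 fun hlow => ?_
  have hks := top_mem_of_two_pow_le hk (by rw [pow_succ]; omega) (not_lt.1 hlow)
  have := binaryValue_erase_add hks
  exact ⟨hks, mem_trimmed.2 (by simp only at this; omega)⟩

def trimmedInsertHom (hk : k < d) (hm : m ≤ 2 ^ k) :
    (hatT d).induce (trimmed d m : Set (Finset (Fin d))) →g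
      (hatT d).induce (trimmed d (2 ^ k + m) : Set (Finset (Fin d))) where
  toFun s := ⟨insert (⟨k, hk⟩ : Fin d) s.1, mem_coe.2 <| mem_trimmed.2 <| by
    rw [binaryValue_insert_top hk ((mem_trimmed.1 s.2).trans_le hm)]
    exact Nat.add_lt_add_left (mem_trimmed.1 s.2) _⟩
  map_rel' {s t} h := show (hatT d).Adj (insert ⟨k, hk⟩ s.1) (insert ⟨k, hk⟩ t.1) from
    hatT_adj_insert
    (fun a ha => binaryValue_lt_two_pow_iff.1 ((mem_trimmed.1 s.2).trans_le hm) a ha)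
    (fun a ha => binaryValue_lt_two_pow_iff.1 ((mem_trimmed.1 t.2).trans_le hm) a ha) h

theorem top_notMem_of_mem_trimmed (hk : k < d) (hm : m ≤ 2 ^ k) {s : Finset (Fin d)}
    (hs : s ∈ trimmed d m) : (⟨k, hk⟩ : Fin d) ∉ s := fun h =>
  (binaryValue_lt_two_pow_iff.1 ((mem_trimmed.1 hs).trans_le hm) _ h).false

theorem trimmedInsertHom_injective (hk : k < d) (hm : m ≤ 2 ^ k) :
    Injective (trimmedInsertHom hk hm) :=
  fun s t h => Subtype.ext <| by
    rw [← erase_insert (top_notMem_of_mem_trimmed hk hm s.2),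
      ← erase_insert (top_notMem_of_mem_trimmed hk hm t.2)]
    exact congrArg (Finset.erase · ⟨k, hk⟩) (congrArg Subtype.val h)

end TopDigit

theorem gathersAtRoot_one (d : ℕ) : GathersAtRoot d 1 := by
  have hconst : (fun v : (trimmed d 1 : Set (Finset (Fin d))) =>
      if (v : Finset (Fin d)) = ∅ then 1 else 0) = fun _ => 1 := by
    funext v
    have hv : binaryValue (v : Finset (Fin d)) < 2 ^ 0 := mem_trimmed.1 v.2
    rw [if_pos (eq_empty_of_forall_notMem fun a ha =>
      (binaryValue_lt_two_pow_iff.1 hv a ha).not_ge (Nat.zero_le _))]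
  rw [GathersAtRoot, hconst]
  exact .refl

theorem exists_acqReach_gathered_halves {d k m : ℕ} (hk : k < d) (hm : m ≤ 2 ^ k)
    (hlow : GathersAtRoot d (2 ^ k)) (hhigh : GathersAtRoot d m) :
    ∃ W, AcqReach ((hatT d).induce (trimmed d (2 ^ k + m) : Set (Finset (Fin d))))
        (fun _ => 1) W ∧
      ∀ y, W y = if (y : Finset (Fin d)) = ∅ then 2 ^ k
        else if (y : Finset (Fin d)) = {⟨k, hk⟩} then m else 0 := by
  set κ : Fin d := ⟨k, hk⟩
  have hle : (trimmed d (2 ^ k) : Set (Finset (Fin d))) ≤ trimmed d (2 ^ k + m) :=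
    fun s hs => mem_trimmed.2 ((mem_trimmed.1 hs).trans_le (Nat.le_add_right _ _))
  set ιA := (hatT d).induceHomOfLE hle
  set ιB := trimmedInsertHom hk hm
  obtain ⟨W₁, hreach₁, hW₁B, hW₁off⟩ :=
    AcqReach.map ιB (trimmedInsertHom_injective hk hm) hhigh (W := fun _ => 1) fun _ => rfl
  have hW₁A : ∀ x, W₁ (ιA x) = 1 := by
    refine fun x => hW₁off _ ?_
    rintro ⟨t, ht⟩
    have hκ : κ ∈ (ιA x : Finset (Fin d)) := ht ▸ mem_insert_self κ _
    exact top_notMem_of_mem_trimmed hk le_rfl x.2 hκ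
  obtain ⟨W₂, hreach₂, hW₂A, hW₂off⟩ := AcqReach.map ιA.toHom ιA.injective hlow hW₁A
  refine ⟨W₂, hreach₁.trans hreach₂, ?_⟩
  intro ⟨y, hy⟩
  rcases trimmed_two_pow_add_cases hk hm hy with hyA | ⟨hκy, hyB⟩
  · have hyκ : y ≠ {κ} := fun h =>
      top_notMem_of_mem_trimmed hk le_rfl hyA (h ▸ mem_singleton_self κ)
    rw [if_neg hyκ]
    exact hW₂A ⟨y, hyA⟩
  · have hy_off : ⟨y, hy⟩ ∉ Set.range ιA := by
      rintro ⟨x, hx⟩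
      exact top_notMem_of_mem_trimmed hk le_rfl x.2 (congrArg Subtype.val hx ▸ hκy)
    have hy_eq : ⟨y, hy⟩ = ιB ⟨y.erase κ, hyB⟩ := Subtype.ext (insert_erase hκy).symm
    rw [hW₂off _ hy_off, congrArg W₁ hy_eq, hW₁B]
    simp only [erase_eq_empty_iff, ne_empty_of_mem hκy, false_or, if_false]

theorem gathersAtRoot_two_pow_add {d k m : ℕ} (hk : k < d) (hm1 : 1 ≤ m) (hm : m ≤ 2 ^ k)
    (hlow : GathersAtRoot d (2 ^ k)) (hhigh : GathersAtRoot d m) :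
    GathersAtRoot d (2 ^ k + m) := by
  obtain ⟨W, hreach, hW⟩ := exists_acqReach_gathered_halves hk hm hlow hhigh
  set κ : Fin d := ⟨k, hk⟩
  set root : (trimmed d (2 ^ k + m) : Set (Finset (Fin d))) :=
    ⟨∅, empty_mem_trimmed (by omega)⟩
  set top : (trimmed d (2 ^ k + m) : Set (Finset (Fin d))) :=
    ⟨{κ}, mem_trimmed.2 <| by
      rw [binaryValue, sum_singleton]; exact Nat.lt_add_of_pos_right hm1⟩
  have hadj : ((hatT d).induce _).Adj top root :=
    Or.inr ⟨κ, mem_singleton_self κ, (erase_singleton κ).symm,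
      fun b hb => absurd hb (notMem_empty b)⟩
  have htop_ne : ({κ} : Finset (Fin d)) ≠ ∅ := singleton_ne_empty κ
  have hmove := acqMove_merge hadj (w := W)
    (by simp [hW, top, htop_ne]; omega) (by simpa [hW, top, root, htop_ne] using hm)
    fun x hxu hxv => by
      rw [hW, if_neg fun h => hxv (Subtype.ext h), if_neg fun h => hxu (Subtype.ext h)]
  have hfinal : (fun x => if x = root then W root + W top else 0) =
      fun x : (trimmed d (2 ^ k + m) : Set (Finset (Fin d))) =>
        if (x : Finset (Fin d)) = ∅ then 2 ^ k + m else 0 := by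
    funext x
    simp [hW, root, top, htop_ne, Subtype.ext_iff]
  exact hreach.tail (hfinal ▸ hmove)

theorem gathersAtRoot {d n : ℕ} (hn : 1 ≤ n) (hnd : n ≤ 2 ^ d) : GathersAtRoot d n := by
  suffices ∀ k ≤ d, ∀ n, 1 ≤ n → n ≤ 2 ^ k → GathersAtRoot d n from this d le_rfl n hn hnd
  intro k
  induction k with
  | zero =>
    intro _ n hn hn0
    obtain rfl : n = 1 := by simp at hn0; omega
    exact gathersAtRoot_one d
  | succ k ih =>
    intro hkd n hn hnk
    rcases le_or_gt n (2 ^ k) with hnk' | hnk'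
    · exact ih (by omega) n hn hnk'
    · obtain ⟨m, rfl⟩ : ∃ m, n = 2 ^ k + m := ⟨n - 2 ^ k, by omega⟩
      rw [pow_succ] at hnk
      exact gathersAtRoot_two_pow_add hkd (by omega) (by omega)
        (ih (by omega) _ Nat.one_le_two_pow le_rfl) (ih (by omega) _ (by omega) (by omega))

/-- For any `d ≥ 0` and any `n` with `1 ≤ n ≤ 2 ^ d`, the tree `T̂_d` contains
a rooted subtree `T` on exactly `n` vertices (a parent-closed set of vertices
containing the root `∅`) such that all weight can be moved to the root via
total acquisition moves; in particular `a_t(T) = 1`. -/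
theorem hatT_trimmed_subtree (d n : ℕ) (hn : 1 ≤ n) (hnd : n ≤ 2 ^ d) :
    ∃ S : Finset (Finset (Fin d)),
      (∅ : Finset (Fin d)) ∈ S ∧
      (∀ s ∈ S, ∀ a ∈ s, (∀ b ∈ s.erase a, a < b) → s.erase a ∈ S) ∧
      S.card = n ∧
      (∃ w : (↑(↑S : Set (Finset (Fin d)))) → ℕ,
        AcqReach ((hatT d).induce (↑S : Set (Finset (Fin d)))) (fun _ => 1) w ∧
        (∀ v : ↑(↑S : Set (Finset (Fin d))), (v : Finset (Fin d)) ≠ ∅ → w v = 0)) ∧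
      totalAcq ((hatT d).induce (↑S : Set (Finset (Fin d)))) = 1 := by
  have hroot := empty_mem_trimmed (d := d) hn
  have hgather := gathersAtRoot hn hnd
  refine ⟨trimmed d n, hroot, fun s hs a _ _ => erase_mem_trimmed hs a, card_trimmed hnd,
    ⟨_, hgather, fun v hv => if_neg hv⟩, ?_⟩
  have : Nonempty (trimmed d n : Set (Finset (Fin d))) := ⟨⟨∅, hroot⟩⟩
  exact totalAcq_eq_one_of_acqReach hgather (r := ⟨∅, hroot⟩) fun x hx =>
    if_neg fun h => hx (Subtype.ext h)
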